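/- Let n ≥ 2 and let ψ : ℕ → (0,∞). There is an absolute constant c(n) > 0 (depending only on n) such that for every N ≥ 1, the n-dimensional Lebesgue measure of V(ψ) = {x ∈ [0,1]^n : |q·x| < ψ(|q|) for infinitely many q ∈ ℤ^n \ {0}} is at most c(n) ∑_{k=N}^∞ k^{n-2} ψ(k). -/

import Mathlib

open MeasureTheory

/-- Sup norm (height) of an integer vector. -/
def qnorm {n : ℕ} (q : Fin n → ℤ) : ℕ := Finset.univ.sup fun i => (q i).natAbs

/-- The set `V(ψ)` of points of the unit cube `[0,1]^n` such that
`|q·x| < ψ(|q|)` for infinitely many nonzero integer vectors `q`. -/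
def Vset (n : ℕ) (ψ : ℕ → ℝ) : Set (Fin n → ℝ) :=
  {x | (∀ i, x i ∈ Set.Icc (0 : ℝ) 1) ∧
    {q : Fin n → ℤ | q ≠ 0 ∧ |∑ i, (q i : ℝ) * x i| < ψ (qnorm q)}.Infinite}

/-! For every `N`, `V(ψ)` is covered by the slabs `{x ∈ [0,1]^n : |q·x| < ψ(k)}` with `|q| = k ≥ N`.
If `|q_i| = |q|`, replacing the coordinate `x_i` by `q·x` is a linear change of variables of
determinant `q_i` that maps such a slab into a box of volume `2ψ(k)`, so the slab has volume at most
`2ψ(k)/k`. There are at most `2n(2k+1)^(n-1) ≤ 2n·3^(n-1)·k^(n-1)` integer vectors of height `k`,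
and summing over them gives the bound with `c(n) = 4n·3^(n-1)`. -/

open Matrix

lemma det_updateRow_one {ι R : Type*} [Fintype ι] [DecidableEq ι] [CommRing R] (i : ι)
    (v : ι → R) : ((1 : Matrix ι ι R).updateRow i v).det = v i := by
  have hv : v = ∑ k, v k • (1 : Matrix ι ι R) k := by
    ext j
    simp [one_apply]
  rw [hv, det_updateRow_sum]
  simp [one_apply]

lemma mulVec_updateRow_one {ι R : Type*} [Fintype ι] [DecidableEq ι] [Semiring R] (i : ι)
    (v x : ι → R) (j : ι) :
    ((1 : Matrix ι ι R).updateRow i v *ᵥ x) j = if j = i then v ⬝ᵥ x else x j := by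
  by_cases hji : j = i
  · subst hji; simp [mulVec]
  · simp [mulVec, hji, dotProduct, one_apply]

section

variable {n : ℕ}

lemma natAbs_le_qnorm (q : Fin n → ℤ) (i : Fin n) : (q i).natAbs ≤ qnorm q :=
  Finset.le_sup (f := fun i => (q i).natAbs) (Finset.mem_univ i)

lemma exists_natAbs_eq_qnorm {q : Fin n → ℤ} (hq : 0 < qnorm q) :
    ∃ i, (q i).natAbs = qnorm q := by
  have huniv : (Finset.univ : Finset (Fin n)).Nonempty := by
    by_contra h
    simp [qnorm, Finset.not_nonempty_iff_eq_empty.mp h] at hq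
  obtain ⟨i, -, hi⟩ := Finset.exists_mem_eq_sup _ huniv fun i => (q i).natAbs
  exact ⟨i, hi.symm⟩

lemma qnorm_eq_zero_iff {q : Fin n → ℤ} : qnorm q = 0 ↔ q = 0 := by
  simp [qnorm, Finset.sup_eq_zero, funext_iff]

lemma one_le_qnorm {q : Fin n → ℤ} (hq : q ≠ 0) : 1 ≤ qnorm q :=
  Nat.one_le_iff_ne_zero.mpr (mt qnorm_eq_zero_iff.mp hq)

noncomputable def qsphere (n k : ℕ) : Finset (Fin n → ℤ) :=
  (Fintype.piFinset fun _ => Finset.Icc (-(k : ℤ)) k).filter (qnorm · = k)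

lemma mem_qsphere {k : ℕ} {q : Fin n → ℤ} : q ∈ qsphere n k ↔ qnorm q = k := by
  simp only [qsphere, Finset.mem_filter, Fintype.mem_piFinset, Finset.mem_Icc,
    and_iff_right_iff_imp]
  rintro rfl i
  have := natAbs_le_qnorm q i
  omega

def cubeSlab (q : Fin n → ℤ) (ε : ℝ) : Set (Fin n → ℝ) :=
  {x | (∀ i, x i ∈ Set.Icc (0 : ℝ) 1) ∧ |∑ i, (q i : ℝ) * x i| < ε}

lemma volume_cubeSlab_le {q : Fin n → ℤ} (hq : q ≠ 0) (ε : ℝ) :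
    volume (cubeSlab q ε) ≤ ENNReal.ofReal (2 * ε / qnorm q) := by
  obtain ⟨i, hi⟩ := exists_natAbs_eq_qnorm (one_le_qnorm hq)
  set f := toLin' ((1 : Matrix (Fin n) (Fin n) ℝ).updateRow i fun j => (q j : ℝ))
  have hdet : LinearMap.det f = q i := by
    rw [LinearMap.det_toLin', det_updateRow_one]
  have habs : |(q i : ℝ)| = qnorm q := by
    rw [← hi, Nat.cast_natAbs, Int.cast_abs]
  have hdet0 : LinearMap.det f ≠ 0 := by
    rw [hdet, ← abs_ne_zero, habs]
    exact_mod_cast (Nat.one_le_iff_ne_zero.mp (one_le_qnorm hq))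
  set box := Set.univ.pi (Function.update (fun _ => Set.Icc (0 : ℝ) 1) i (Set.Ioo (-ε) ε))
  have hsub : cubeSlab q ε ⊆ f ⁻¹' box := by
    rintro x ⟨hx, hqx⟩
    simp only [box, Set.mem_preimage, Set.mem_univ_pi, f, toLin'_apply,
      mulVec_updateRow_one]
    intro j
    by_cases hji : j = i
    · subst hji
      simpa [dotProduct] using abs_lt.mp hqx
    · simpa [hji] using hx j
  have hbox : volume box = ENNReal.ofReal (2 * ε) := by
    rw [volume_pi_pi, Finset.prod_congr rfl fun j _ =>
      Function.apply_update (fun _ (s : Set ℝ) => volume s) _ i _ j,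
      Finset.prod_update_of_mem (Finset.mem_univ i)]
    simp [two_mul]
  calc volume (cubeSlab q ε) ≤ volume (f ⁻¹' box) := measure_mono hsub
    _ = ENNReal.ofReal |(LinearMap.det f)⁻¹| * volume box :=
        Measure.addHaar_preimage_linearMap volume hdet0 box
    _ = ENNReal.ofReal (2 * ε / qnorm q) := by
        rw [hbox, ← ENNReal.ofReal_mul (abs_nonneg _), hdet, abs_inv, habs, inv_mul_eq_div]

lemma card_qsphere_le {k : ℕ} (hk : 1 ≤ k) :
    (qsphere n k).card ≤ 2 * n * (2 * k + 1) ^ (n - 1) := by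
  set T : Fin n → Finset (Fin n → ℤ) := fun i =>
    Fintype.piFinset (Function.update (fun _ => Finset.Icc (-(k : ℤ)) k) i {-(k : ℤ), (k : ℤ)})
  have hsub : qsphere n k ⊆ Finset.univ.biUnion T := by
    intro q hq
    rw [mem_qsphere] at hq
    obtain ⟨i, hi⟩ := exists_natAbs_eq_qnorm (hq ▸ hk)
    refine Finset.mem_biUnion.mpr ⟨i, Finset.mem_univ i, Fintype.mem_piFinset.mpr fun j => ?_⟩
    by_cases hji : j = i
    · subst hji
      simp only [Function.update_self, Finset.mem_insert, Finset.mem_singleton]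
      omega
    · have := natAbs_le_qnorm q j
      simp only [Function.update_of_ne hji, Finset.mem_Icc]
      omega
  have hT : ∀ i, (T i).card ≤ 2 * (2 * k + 1) ^ (n - 1) := by
    intro i
    rw [Fintype.card_piFinset, Finset.prod_congr rfl fun j _ =>
      Function.apply_update (fun _ (s : Finset ℤ) => s.card) _ i _ j,
      Finset.prod_update_of_mem (Finset.mem_univ i)]
    have hpair : ({-(k : ℤ), (k : ℤ)} : Finset ℤ).card ≤ 2 := Finset.card_le_two
    have hIcc : ((k : ℤ) + 1 - -(k : ℤ)).toNat = 2 * k + 1 := by omega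
    rw [Int.card_Icc, hIcc, Finset.prod_const, ← Finset.erase_eq,
      Finset.card_erase_of_mem (Finset.mem_univ i), Finset.card_univ, Fintype.card_fin]
    exact Nat.mul_le_mul_right _ hpair
  calc (qsphere n k).card ≤ (Finset.univ.biUnion T).card := Finset.card_le_card hsub
    _ ≤ ∑ i, (T i).card := Finset.card_biUnion_le
    _ ≤ ∑ _i : Fin n, 2 * (2 * k + 1) ^ (n - 1) := Finset.sum_le_sum fun i _ => hT i
    _ = 2 * n * (2 * k + 1) ^ (n - 1) := by
        rw [Finset.sum_const, Finset.card_univ, Fintype.card_fin, smul_eq_mul]; ring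

lemma finite_setOf_qnorm_lt (N : ℕ) : {q : Fin n → ℤ | qnorm q < N}.Finite := by
  refine ((Finset.range N).finite_toSet.biUnion fun k _ => (qsphere n k).finite_toSet).subset ?_
  intro q hq
  simp only [Set.mem_iUnion, Finset.mem_coe, mem_qsphere, Finset.mem_range]
  exact ⟨qnorm q, hq, rfl⟩

lemma Vset_subset_iUnion_cubeSlab (ψ : ℕ → ℝ) (N : ℕ) :
    Vset n ψ ⊆ ⋃ k, ⋃ (_ : N ≤ k), ⋃ q ∈ qsphere n k, cubeSlab q (ψ k) := by
  rintro x ⟨hx, hinf⟩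
  obtain ⟨q, ⟨-, hqx⟩, hqN⟩ := (hinf.sdiff (finite_setOf_qnorm_lt N)).nonempty
  simp only [Set.mem_iUnion]
  exact ⟨qnorm q, not_lt.mp hqN, q, mem_qsphere.mpr rfl, hx, hqx⟩

lemma two_mul_add_one_pow_le (k : ℝ) (hk : 1 ≤ k) (m : ℕ) :
    (2 * k + 1) ^ (m - 1) ≤ 3 ^ (m - 1) * k ^ (m - 2) * k := calc
  (2 * k + 1) ^ (m - 1) ≤ (3 * k) ^ (m - 1) := by gcongr; linarith
  _ = 3 ^ (m - 1) * k ^ (m - 1) := mul_pow _ _ _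
  _ ≤ 3 ^ (m - 1) * k ^ (m - 2 + 1) := by gcongr; omega
  _ = 3 ^ (m - 1) * k ^ (m - 2) * k := by ring

lemma volume_biUnion_qsphere_cubeSlab_le {k : ℕ} (hk : 1 ≤ k) {ε : ℝ} (hε : 0 ≤ ε) :
    volume (⋃ q ∈ qsphere n k, cubeSlab q ε) ≤
      ENNReal.ofReal (4 * n * 3 ^ (n - 1)) * ENNReal.ofReal ((k : ℝ) ^ (n - 2) * ε) := by
  have hk' : (1 : ℝ) ≤ k := by exact_mod_cast hk
  have hcard : ((qsphere n k).card : ℝ) ≤ 2 * n * (3 ^ (n - 1) * (k : ℝ) ^ (n - 2) * k) := calc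
    ((qsphere n k).card : ℝ) ≤ 2 * n * (2 * k + 1) ^ (n - 1) := by
      exact_mod_cast card_qsphere_le hk
    _ ≤ _ := by gcongr; exact two_mul_add_one_pow_le k hk' n
  have hslab : ∀ q ∈ qsphere n k, volume (cubeSlab q ε) ≤ ENNReal.ofReal (2 * ε / k) := by
    intro q hq
    have hqk := mem_qsphere.mp hq
    have hq0 : q ≠ 0 := fun h => by rw [← qnorm_eq_zero_iff] at h; omega
    simpa [hqk] using volume_cubeSlab_le hq0 ε
  calc volume (⋃ q ∈ qsphere n k, cubeSlab q ε)
      ≤ ∑ q ∈ qsphere n k, volume (cubeSlab q ε) := measure_biUnion_finset_le _ _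
    _ ≤ (qsphere n k).card • ENNReal.ofReal (2 * ε / k) := Finset.sum_le_card_nsmul _ _ _ hslab
    _ = ENNReal.ofReal ((qsphere n k).card * (2 * ε / k)) := by
        rw [nsmul_eq_mul, ENNReal.ofReal_mul (by positivity), ENNReal.ofReal_natCast]
    _ ≤ ENNReal.ofReal (4 * n * 3 ^ (n - 1) * ((k : ℝ) ^ (n - 2) * ε)) := by
        refine ENNReal.ofReal_le_ofReal ?_
        calc ((qsphere n k).card : ℝ) * (2 * ε / k)
            ≤ 2 * n * (3 ^ (n - 1) * (k : ℝ) ^ (n - 2) * k) * (2 * ε / k) := by gcongr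
          _ = 4 * n * 3 ^ (n - 1) * ((k : ℝ) ^ (n - 2) * ε) := by
            field_simp; ring
    _ = _ := ENNReal.ofReal_mul (by positivity)

end

theorem stmt15 (n : ℕ) (hn : 2 ≤ n) :
    ∃ c : ℝ, 0 < c ∧
      ∀ ψ : ℕ → ℝ, (∀ k, 0 < ψ k) →
        ∀ N : ℕ, 1 ≤ N →
          volume (Vset n ψ) ≤
            ENNReal.ofReal c *
              ∑' k : ℕ, if N ≤ k then ENNReal.ofReal ((k : ℝ) ^ (n - 2) * ψ k) else 0 := by
  have hn0 : (0 : ℝ) < n := by exact_mod_cast (by omega : 0 < n)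
  refine ⟨4 * n * 3 ^ (n - 1), by positivity, fun ψ hψ N hN => ?_⟩
  calc volume (Vset n ψ)
      ≤ volume (⋃ k, ⋃ (_ : N ≤ k), ⋃ q ∈ qsphere n k, cubeSlab q (ψ k)) :=
        measure_mono (Vset_subset_iUnion_cubeSlab ψ N)
    _ ≤ ∑' k, volume (⋃ (_ : N ≤ k), ⋃ q ∈ qsphere n k, cubeSlab q (ψ k)) := measure_iUnion_le _
    _ ≤ ∑' k : ℕ, ENNReal.ofReal (4 * n * 3 ^ (n - 1)) *
          if N ≤ k then ENNReal.ofReal ((k : ℝ) ^ (n - 2) * ψ k) else 0 := by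
        refine ENNReal.tsum_le_tsum fun k => ?_
        split_ifs with hk
        · simpa [hk] using volume_biUnion_qsphere_cubeSlab_le (hN.trans hk) (hψ k).le
        · simp [hk]
    _ = _ := ENNReal.tsum_mul_left
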